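/- Let (M, H) be a bicocycle double cross product pair of coalgebras with group-likes e ∈ M, 1 ∈ H, equipped with coalgebra maps varφ, ψ, φ (= ·), θ, μ (= ∗), γ satisfying the normalization conditions. Then the element e ⊗ 1 is a unit for the multiplication (x⊗h)(x'⊗h') = x₍₁₎·[varφ(h₍₁₎,x'₍₁₎)·γ(ψ(h₍₂₎,x'₍₂₎),h'₍₁₎)] ⊗ [θ(x₍₂₎,varφ(h₍₃₎,x'₍₃₎))∗ψ(h₍₄₎,x'₍₄₎)]∗h'₍₂₎ on M⊗H if and only if e·x = x = x·e, 1∗h = h = h∗1, θ(x,e) = ε(x)1 = θ(e,x), and γ(h,1) = ε(h)e = γ(1,h) for all x ∈ M, h ∈ H. -/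
import Mathlib


open TensorProduct LinearMap

section Aux
variable {k : Type*} [Field k]
variable {A B C D A' B' C' D' : Type*}
  [AddCommGroup A] [Module k A] [AddCommGroup B] [Module k B]
  [AddCommGroup C] [Module k C] [AddCommGroup D] [Module k D]
  [AddCommGroup A'] [Module k A'] [AddCommGroup B'] [Module k B']
  [AddCommGroup C'] [Module k C'] [AddCommGroup D'] [Module k D']

lemma ttt_natural (f : A →ₗ[k] A') (g : B →ₗ[k] B') (p : C →ₗ[k] C') (q : D →ₗ[k] D') :
    (TensorProduct.tensorTensorTensorComm k A' B' C' D').toLinearMap ∘ₗ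
      (TensorProduct.map (TensorProduct.map f g) (TensorProduct.map p q)) =
    (TensorProduct.map (TensorProduct.map f p) (TensorProduct.map g q)) ∘ₗ
      (TensorProduct.tensorTensorTensorComm k A B C D).toLinearMap := by
  apply TensorProduct.ext_fourfold'
  intro a b c d
  simp [tensorTensorTensorComm_tmul]

lemma ttt_tmul_left (a : A) (b : B) (t : C ⊗[k] D) :
    (TensorProduct.tensorTensorTensorComm k A B C D) ((a ⊗ₜ b) ⊗ₜ t) =
      TensorProduct.map (TensorProduct.mk k A C a) (TensorProduct.mk k B D b) t := by
  induction t using TensorProduct.induction_on with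
  | zero => simp
  | tmul c d => simp [tensorTensorTensorComm_tmul]
  | add s t hs ht => rw [tmul_add, map_add, hs, ht, map_add]

lemma ttt_tmul_right (c : C) (d : D) (t : A ⊗[k] B) :
    (TensorProduct.tensorTensorTensorComm k A B C D) (t ⊗ₜ (c ⊗ₜ d)) =
      TensorProduct.map ((TensorProduct.mk k A C).flip c) ((TensorProduct.mk k B D).flip d) t := by
  induction t using TensorProduct.induction_on with
  | zero => simp
  | tmul a b => simp [tensorTensorTensorComm_tmul]
  | add s t hs ht => rw [add_tmul, map_add, hs, ht, map_add]

lemma ttt_nat_left (f : A →ₗ[k] A') (s : A ⊗[k] A) (t : C ⊗[k] D) :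
    (TensorProduct.tensorTensorTensorComm k A' A' C D) ((TensorProduct.map f f s) ⊗ₜ t) =
    TensorProduct.map (TensorProduct.map f LinearMap.id) (TensorProduct.map f LinearMap.id)
      ((TensorProduct.tensorTensorTensorComm k A A C D) (s ⊗ₜ t)) := by
  have h := congrFun (congrArg DFunLike.coe
    (ttt_natural f f (LinearMap.id (R := k) (M := C)) (LinearMap.id (R := k) (M := D)))) (s ⊗ₜ t)
  simpa only [LinearMap.comp_apply, LinearEquiv.coe_coe, TensorProduct.map_tmul,
    TensorProduct.map_id, LinearMap.id_coe, id_eq] using h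

lemma ttt_nat_right (g : C →ₗ[k] C') (s : A ⊗[k] B) (t : C ⊗[k] C) :
    (TensorProduct.tensorTensorTensorComm k A B C' C') (s ⊗ₜ (TensorProduct.map g g t)) =
    TensorProduct.map (TensorProduct.map LinearMap.id g) (TensorProduct.map LinearMap.id g)
      ((TensorProduct.tensorTensorTensorComm k A B C C) (s ⊗ₜ t)) := by
  have h := congrFun (congrArg DFunLike.coe
    (ttt_natural (LinearMap.id (R := k) (M := A)) (LinearMap.id (R := k) (M := B)) g g)) (s ⊗ₜ t)
  simpa only [LinearMap.comp_apply, LinearEquiv.coe_coe, TensorProduct.map_tmul,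
    TensorProduct.map_id, LinearMap.id_coe, id_eq] using h

lemma lid_natural (β : A →ₗ[k] C) :
    (TensorProduct.lid k C).toLinearMap ∘ₗ lTensor k β = β ∘ₗ (TensorProduct.lid k A).toLinearMap := by
  apply TensorProduct.ext'
  intro c a
  simp

lemma rid_natural (β : A →ₗ[k] C) :
    (TensorProduct.rid k C).toLinearMap ∘ₗ rTensor k β = β ∘ₗ (TensorProduct.rid k A).toLinearMap := by
  apply TensorProduct.ext'
  intro a c
  simp

lemma extract_fst (dA : A →ₗ[k] A ⊗[k] A) (eA : A →ₗ[k] k)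
    (hA : (TensorProduct.lid k A).toLinearMap ∘ₗ (LinearMap.rTensor A eA) ∘ₗ dA = LinearMap.id)
    (α : A →ₗ[k] B) (β : A →ₗ[k] C) (eB : B →ₗ[k] k) (hα : eB ∘ₗ α = eA) (a : A) :
    (TensorProduct.lid k C) ((LinearMap.rTensor C eB) ((TensorProduct.map α β) (dA a))) = β a := by
  have h1 : (LinearMap.rTensor C eB) ∘ₗ (TensorProduct.map α β) =
      (LinearMap.lTensor k β) ∘ₗ (LinearMap.rTensor A eA) := by
    rw [rTensor, lTensor, rTensor, ← TensorProduct.map_comp, ← TensorProduct.map_comp,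
      hα, LinearMap.comp_id, LinearMap.id_comp, LinearMap.id_comp]
  calc (TensorProduct.lid k C) ((LinearMap.rTensor C eB) ((TensorProduct.map α β) (dA a)))
      = (TensorProduct.lid k C) ((LinearMap.lTensor k β) ((LinearMap.rTensor A eA) (dA a))) := by
        rw [← LinearMap.comp_apply (rTensor C eB), h1]; rfl
    _ = β ((TensorProduct.lid k A) ((LinearMap.rTensor A eA) (dA a))) := by
        have := congrFun (congrArg DFunLike.coe (lid_natural (k := k) β)) ((LinearMap.rTensor A eA) (dA a))
        simpa using this
    _ = β a := by
        rw [show (TensorProduct.lid k A) ((LinearMap.rTensor A eA) (dA a)) = a from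
          congrFun (congrArg DFunLike.coe hA) a]

lemma extract_snd (dA : A →ₗ[k] A ⊗[k] A) (eA : A →ₗ[k] k)
    (hA : (TensorProduct.rid k A).toLinearMap ∘ₗ (LinearMap.lTensor A eA) ∘ₗ dA = LinearMap.id)
    (α : A →ₗ[k] B) (β : A →ₗ[k] C) (eC : C →ₗ[k] k) (hβ : eC ∘ₗ β = eA) (a : A) :
    (TensorProduct.rid k B) ((LinearMap.lTensor B eC) ((TensorProduct.map α β) (dA a))) = α a := by
  have h1 : (LinearMap.lTensor B eC) ∘ₗ (TensorProduct.map α β) =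
      (LinearMap.rTensor k α) ∘ₗ (LinearMap.lTensor A eA) := by
    rw [rTensor, lTensor, lTensor, ← TensorProduct.map_comp, ← TensorProduct.map_comp,
      hβ, LinearMap.comp_id, LinearMap.id_comp, LinearMap.id_comp]
  calc (TensorProduct.rid k B) ((LinearMap.lTensor B eC) ((TensorProduct.map α β) (dA a)))
      = (TensorProduct.rid k B) ((LinearMap.rTensor k α) ((LinearMap.lTensor A eA) (dA a))) := by
        rw [← LinearMap.comp_apply (lTensor B eC), h1]; rfl
    _ = α ((TensorProduct.rid k A) ((LinearMap.lTensor A eA) (dA a))) := by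
        have := congrFun (congrArg DFunLike.coe (rid_natural (k := k) α)) ((LinearMap.lTensor A eA) (dA a))
        simpa using this
    _ = α a := by
        rw [show (TensorProduct.rid k A) ((LinearMap.lTensor A eA) (dA a)) = a from
          congrFun (congrArg DFunLike.coe hA) a]

end Aux


section

variable (k : Type*) [Field k]

/-- Sweedler pairing: `(a ⊗ b) ↦ u(a₍₁₎ ⊗ b₍₁₎) ⊗ v(a₍₂₎ ⊗ b₍₂₎)`. -/
noncomputable def sweedlerPair {A B C D : Type*}
    [AddCommGroup A] [Module k A] [AddCommGroup B] [Module k B]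
    [AddCommGroup C] [Module k C] [AddCommGroup D] [Module k D]
    (dA : A →ₗ[k] A ⊗[k] A) (dB : B →ₗ[k] B ⊗[k] B)
    (u : A ⊗[k] B →ₗ[k] C) (v : A ⊗[k] B →ₗ[k] D) :
    A ⊗[k] B →ₗ[k] C ⊗[k] D :=
  (TensorProduct.map u v) ∘ₗ
    (TensorProduct.tensorTensorTensorComm k A A B B).toLinearMap ∘ₗ
    (TensorProduct.map dA dB)

variable (M H : Type*)
  [AddCommGroup M] [Module k M] [AddCommGroup H] [Module k H]

/-- The multiplication of the bicocycle double cross product: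
`(x⊗h)(x'⊗h') = x₍₁₎·[varφ(h₍₁₎,x'₍₁₎)·γ(ψ(h₍₂₎,x'₍₂₎),h'₍₁₎)]
                 ⊗ [θ(x₍₂₎,varφ(h₍₃₎,x'₍₃₎))∗ψ(h₍₄₎,x'₍₄₎)]∗h'₍₂₎`. -/
noncomputable def bdcpMulBialg
    (dM : M →ₗ[k] M ⊗[k] M) (dH : H →ₗ[k] H ⊗[k] H)
    (act : H ⊗[k] M →ₗ[k] M) (psi : H ⊗[k] M →ₗ[k] H)
    (mM : M ⊗[k] M →ₗ[k] M) (th : M ⊗[k] M →ₗ[k] H)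
    (mH : H ⊗[k] H →ₗ[k] H) (gam : H ⊗[k] H →ₗ[k] M) :
    (M ⊗[k] H) ⊗[k] (M ⊗[k] H) →ₗ[k] M ⊗[k] H :=
  -- `(h ⊗ x') ↦ (varφ(h₍₁₎,x'₍₁₎) ⊗ ψ(h₍₂₎,x'₍₂₎)) ⊗ (varφ(h₍₃₎,x'₍₃₎) ⊗ ψ(h₍₄₎,x'₍₄₎))`
  letI Q2 : H ⊗[k] M →ₗ[k] (M ⊗[k] H) ⊗[k] (M ⊗[k] H) :=
    sweedlerPair k dH dM (sweedlerPair k dH dM act psi) (sweedlerPair k dH dM act psi)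
  -- `x₁ ⊗ ((a ⊗ p) ⊗ h'₁) ↦ x₁·(a·γ(p ⊗ h'₁))`
  letI A1 : M ⊗[k] ((M ⊗[k] H) ⊗[k] H) →ₗ[k] M :=
    mM ∘ₗ (LinearMap.lTensor M
      (mM ∘ₗ (LinearMap.lTensor M gam) ∘ₗ (TensorProduct.assoc k M H H).toLinearMap))
  -- `x₂ ⊗ ((c ⊗ q) ⊗ h'₂) ↦ (θ(x₂ ⊗ c) ∗ q) ∗ h'₂`
  letI B1 : M ⊗[k] ((M ⊗[k] H) ⊗[k] H) →ₗ[k] H :=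
    mH ∘ₗ (LinearMap.rTensor H (mH ∘ₗ (LinearMap.rTensor H th))) ∘ₗ
      (LinearMap.rTensor H ((TensorProduct.assoc k M M H).symm.toLinearMap)) ∘ₗ
      (TensorProduct.assoc k M (M ⊗[k] H) H).symm.toLinearMap
  (TensorProduct.map A1 B1) ∘ₗ
    (TensorProduct.tensorTensorTensorComm k M M
      ((M ⊗[k] H) ⊗[k] H) ((M ⊗[k] H) ⊗[k] H)).toLinearMap ∘ₗ
    (LinearMap.lTensor (M ⊗[k] M)
      (TensorProduct.tensorTensorTensorComm k (M ⊗[k] H) (M ⊗[k] H) H H).toLinearMap) ∘ₗ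
    (LinearMap.lTensor (M ⊗[k] M) (TensorProduct.map Q2 dH)) ∘ₗ
    (LinearMap.lTensor (M ⊗[k] M) ((TensorProduct.assoc k H M H).symm.toLinearMap)) ∘ₗ
    (TensorProduct.assoc k (M ⊗[k] M) H (M ⊗[k] H)).toLinearMap ∘ₗ
    (LinearMap.rTensor (M ⊗[k] H) (LinearMap.rTensor H dM))


section AuxDefs
variable {k : Type*} [Field k] {M H : Type*}
  [AddCommGroup M] [Module k M] [AddCommGroup H] [Module k H]

noncomputable def auxA1 (mM : M ⊗[k] M →ₗ[k] M) (gam : H ⊗[k] H →ₗ[k] M) :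
    M ⊗[k] ((M ⊗[k] H) ⊗[k] H) →ₗ[k] M :=
  mM ∘ₗ (LinearMap.lTensor M
    (mM ∘ₗ (LinearMap.lTensor M gam) ∘ₗ (TensorProduct.assoc k M H H).toLinearMap))

noncomputable def auxB1 (th : M ⊗[k] M →ₗ[k] H) (mH : H ⊗[k] H →ₗ[k] H) :
    M ⊗[k] ((M ⊗[k] H) ⊗[k] H) →ₗ[k] H :=
  mH ∘ₗ (LinearMap.rTensor H (mH ∘ₗ (LinearMap.rTensor H th))) ∘ₗ
    (LinearMap.rTensor H ((TensorProduct.assoc k M M H).symm.toLinearMap)) ∘ₗ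
    (TensorProduct.assoc k M (M ⊗[k] H) H).symm.toLinearMap

noncomputable def auxJL (e : M) (oneH : H) : M ⊗[k] H →ₗ[k] M ⊗[k] ((M ⊗[k] H) ⊗[k] H) :=
  (TensorProduct.mk k M ((M ⊗[k] H) ⊗[k] H) e) ∘ₗ
    (LinearMap.rTensor H ((TensorProduct.mk k M H).flip oneH))

noncomputable def auxJR (e : M) (oneH : H) : M ⊗[k] H →ₗ[k] M ⊗[k] ((M ⊗[k] H) ⊗[k] H) :=
  LinearMap.lTensor M (((TensorProduct.mk k (M ⊗[k] H) H).flip oneH) ∘ₗ (TensorProduct.mk k M H e))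

lemma auxJL_tmul (e : M) (oneH : H) (x : M) (h : H) :
    auxJL (k := k) e oneH (x ⊗ₜ h) = e ⊗ₜ ((x ⊗ₜ oneH) ⊗ₜ h) := by
  simp [auxJL]

lemma auxJR_tmul (e : M) (oneH : H) (x : M) (h : H) :
    auxJR (k := k) e oneH (x ⊗ₜ h) = x ⊗ₜ ((e ⊗ₜ h) ⊗ₜ oneH) := by
  simp [auxJR]

lemma auxA1_JL (mM : M ⊗[k] M →ₗ[k] M) (gam : H ⊗[k] H →ₗ[k] M) (e : M) (oneH : H)
    (x : M) (h : H) :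
    (auxA1 mM gam ∘ₗ auxJL e oneH) (x ⊗ₜ h) = mM (e ⊗ₜ mM (x ⊗ₜ gam (oneH ⊗ₜ h))) := by
  simp [auxA1, auxJL_tmul]

lemma auxB1_JL (th : M ⊗[k] M →ₗ[k] H) (mH : H ⊗[k] H →ₗ[k] H) (e : M) (oneH : H)
    (x : M) (h : H) :
    (auxB1 th mH ∘ₗ auxJL e oneH) (x ⊗ₜ h) = mH (mH (th (e ⊗ₜ x) ⊗ₜ oneH) ⊗ₜ h) := by
  simp [auxB1, auxJL_tmul]

lemma auxA1_JR (mM : M ⊗[k] M →ₗ[k] M) (gam : H ⊗[k] H →ₗ[k] M) (e : M) (oneH : H)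
    (x : M) (h : H) :
    (auxA1 mM gam ∘ₗ auxJR e oneH) (x ⊗ₜ h) = mM (x ⊗ₜ mM (e ⊗ₜ gam (h ⊗ₜ oneH))) := by
  simp [auxA1, auxJR_tmul]

lemma auxB1_JR (th : M ⊗[k] M →ₗ[k] H) (mH : H ⊗[k] H →ₗ[k] H) (e : M) (oneH : H)
    (x : M) (h : H) :
    (auxB1 th mH ∘ₗ auxJR e oneH) (x ⊗ₜ h) = mH (mH (th (x ⊗ₜ e) ⊗ₜ h) ⊗ₜ oneH) := by
  simp [auxB1, auxJR_tmul]

end AuxDefs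

set_option maxHeartbeats 2000000 in
/-- For a bicocycle double cross product pair `(M, H)` of coalgebras
with group-likes `e ∈ M`, `1 ∈ H` and coalgebra structure maps
`varφ, ψ, φ, θ, μ, γ` satisfying the normalization conditions, the element `e ⊗ 1` is
a unit for the bicocycle double cross product multiplication on `M ⊗ H` if and only if
`e·x = x = x·e`, `1∗h = h = h∗1`, `θ(x,e) = ε(x)1 = θ(e,x)` and
`γ(h,1) = ε(h)e = γ(1,h)`. -/
theorem bicocycle_double_cross_product_unit_iff
    (dM : M →ₗ[k] M ⊗[k] M) (eM : M →ₗ[k] k)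
    (dH : H →ₗ[k] H ⊗[k] H) (eH : H →ₗ[k] k)
    (act : H ⊗[k] M →ₗ[k] M) (psi : H ⊗[k] M →ₗ[k] H)
    (mM : M ⊗[k] M →ₗ[k] M) (th : M ⊗[k] M →ₗ[k] H)
    (mH : H ⊗[k] H →ₗ[k] H) (gam : H ⊗[k] H →ₗ[k] M)
    (e : M) (oneH : H)
    -- `M` is a coalgebra
    (hM₁ : (TensorProduct.assoc k M M M).toLinearMap ∘ₗ (LinearMap.rTensor M dM) ∘ₗ dM =
      (LinearMap.lTensor M dM) ∘ₗ dM)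
    (hM₂ : (TensorProduct.lid k M).toLinearMap ∘ₗ (LinearMap.rTensor M eM) ∘ₗ dM =
      LinearMap.id)
    (hM₃ : (TensorProduct.rid k M).toLinearMap ∘ₗ (LinearMap.lTensor M eM) ∘ₗ dM =
      LinearMap.id)
    -- `H` is a coalgebra
    (hH₁ : (TensorProduct.assoc k H H H).toLinearMap ∘ₗ (LinearMap.rTensor H dH) ∘ₗ dH =
      (LinearMap.lTensor H dH) ∘ₗ dH)
    (hH₂ : (TensorProduct.lid k H).toLinearMap ∘ₗ (LinearMap.rTensor H eH) ∘ₗ dH =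
      LinearMap.id)
    (hH₃ : (TensorProduct.rid k H).toLinearMap ∘ₗ (LinearMap.lTensor H eH) ∘ₗ dH =
      LinearMap.id)
    -- group-likes
    (he₁ : dM e = e ⊗ₜ e) (he₂ : eM e = 1)
    (ho₁ : dH oneH = oneH ⊗ₜ oneH) (ho₂ : eH oneH = 1)
    -- the six structure maps are coalgebra morphisms
    (hact₁ : dM ∘ₗ act = sweedlerPair k dH dM act act)
    (hact₂ : ∀ (h : H) (x : M), eM (act (h ⊗ₜ x)) = eH h * eM x)
    (hpsi₁ : dH ∘ₗ psi = sweedlerPair k dH dM psi psi)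
    (hpsi₂ : ∀ (h : H) (x : M), eH (psi (h ⊗ₜ x)) = eH h * eM x)
    (hmM₁ : dM ∘ₗ mM = sweedlerPair k dM dM mM mM)
    (hmM₂ : ∀ x x' : M, eM (mM (x ⊗ₜ x')) = eM x * eM x')
    (hth₁ : dH ∘ₗ th = sweedlerPair k dM dM th th)
    (hth₂ : ∀ x x' : M, eH (th (x ⊗ₜ x')) = eM x * eM x')
    (hmH₁ : dH ∘ₗ mH = sweedlerPair k dH dH mH mH)
    (hmH₂ : ∀ h h' : H, eH (mH (h ⊗ₜ h')) = eH h * eH h')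
    (hgam₁ : dM ∘ₗ gam = sweedlerPair k dH dH gam gam)
    (hgam₂ : ∀ h h' : H, eM (gam (h ⊗ₜ h')) = eH h * eH h')
    -- the normalization conditions (3.40)
    (hn₁ : ∀ x : M, act (oneH ⊗ₜ x) = x)
    (hn₂ : ∀ h : H, psi (h ⊗ₜ e) = h)
    (hn₃ : ∀ h : H, act (h ⊗ₜ e) = eH h • e)
    (hn₄ : ∀ x : M, psi (oneH ⊗ₜ x) = eM x • oneH)
    (hn₅ : th (e ⊗ₜ e) = oneH) (hn₆ : mH (oneH ⊗ₜ oneH) = oneH)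
    (hn₇ : mM (e ⊗ₜ e) = e) (hn₈ : gam (oneH ⊗ₜ oneH) = e) :
    -- `e ⊗ 1` is a unit for the bicocycle double cross product multiplication
    ((∀ a : M ⊗[k] H,
        bdcpMulBialg k M H dM dH act psi mM th mH gam ((e ⊗ₜ oneH) ⊗ₜ a) = a) ∧
     (∀ a : M ⊗[k] H,
        bdcpMulBialg k M H dM dH act psi mM th mH gam (a ⊗ₜ (e ⊗ₜ oneH)) = a)) ↔
    -- iff the unit and normalization conditions for `φ, μ, θ, γ`
    ((∀ x : M, mM (e ⊗ₜ x) = x) ∧ (∀ x : M, mM (x ⊗ₜ e) = x) ∧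
     (∀ h : H, mH (oneH ⊗ₜ h) = h) ∧ (∀ h : H, mH (h ⊗ₜ oneH) = h) ∧
     (∀ x : M, th (x ⊗ₜ e) = eM x • oneH) ∧ (∀ x : M, th (e ⊗ₜ x) = eM x • oneH) ∧
     (∀ h : H, gam (h ⊗ₜ oneH) = eH h • e) ∧ (∀ h : H, gam (oneH ⊗ₜ h) = eH h • e)) := by
  classical
  -- elementwise counit identities
  have hMr : ∀ x : M, (LinearMap.lTensor M eM) (dM x) = x ⊗ₜ (1 : k) := by
    intro x
    apply (TensorProduct.rid k M).injective
    have h1 := congrFun (congrArg DFunLike.coe hM₃) x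
    simp only [LinearMap.comp_apply, LinearEquiv.coe_coe, LinearMap.id_apply] at h1
    simpa using h1
  have hHl : ∀ h : H, (LinearMap.rTensor H eH) (dH h) = (1 : k) ⊗ₜ h := by
    intro h
    apply (TensorProduct.lid k H).injective
    have h1 := congrFun (congrArg DFunLike.coe hH₂) h
    simp only [LinearMap.comp_apply, LinearEquiv.coe_coe, LinearMap.id_apply] at h1
    simpa using h1
  -- the elementary "half unit" lemmas for sweedlerPair act psi
  have hP1 : ∀ x : M, sweedlerPair k dH dM act psi (oneH ⊗ₜ x) = x ⊗ₜ oneH := by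
    intro x
    have e1 : sweedlerPair k dH dM act psi (oneH ⊗ₜ x)
        = TensorProduct.map act psi
          ((TensorProduct.tensorTensorTensorComm k H H M M) ((oneH ⊗ₜ oneH) ⊗ₜ dM x)) := by
      simp [sweedlerPair, ho₁]
    rw [e1, ttt_tmul_left, ← LinearMap.comp_apply, ← TensorProduct.map_comp]
    have e3 : act ∘ₗ TensorProduct.mk k H M oneH = LinearMap.id :=
      LinearMap.ext fun y => by simpa using hn₁ y
    have e4 : psi ∘ₗ TensorProduct.mk k H M oneH =
        (LinearMap.toSpanSingleton k H oneH) ∘ₗ eM :=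
      LinearMap.ext fun y => by simp [hn₄ y, LinearMap.toSpanSingleton_apply]
    rw [e3, e4]
    have e5 : TensorProduct.map (LinearMap.id (R := k) (M := M))
        ((LinearMap.toSpanSingleton k H oneH) ∘ₗ eM)
        = (LinearMap.lTensor M (LinearMap.toSpanSingleton k H oneH)) ∘ₗ
          (LinearMap.lTensor M eM) := by
      rw [lTensor, lTensor, ← TensorProduct.map_comp, LinearMap.id_comp]
    rw [e5, LinearMap.comp_apply, hMr x]
    simp [LinearMap.toSpanSingleton_apply]
  have hP2 : ∀ h : H, sweedlerPair k dH dM act psi (h ⊗ₜ e) = e ⊗ₜ h := by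
    intro h
    have e1 : sweedlerPair k dH dM act psi (h ⊗ₜ e)
        = TensorProduct.map act psi
          ((TensorProduct.tensorTensorTensorComm k H H M M) (dH h ⊗ₜ (e ⊗ₜ e))) := by
      simp [sweedlerPair, he₁]
    rw [e1, ttt_tmul_right, ← LinearMap.comp_apply, ← TensorProduct.map_comp]
    have e3 : act ∘ₗ (TensorProduct.mk k H M).flip e =
        (LinearMap.toSpanSingleton k M e) ∘ₗ eH :=
      LinearMap.ext fun y => by simp [hn₃ y, LinearMap.toSpanSingleton_apply]
    have e4 : psi ∘ₗ (TensorProduct.mk k H M).flip e = LinearMap.id :=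
      LinearMap.ext fun y => by simpa using hn₂ y
    rw [e3, e4]
    have e5 : TensorProduct.map ((LinearMap.toSpanSingleton k M e) ∘ₗ eH)
        (LinearMap.id (R := k) (M := H))
        = (LinearMap.rTensor H (LinearMap.toSpanSingleton k M e)) ∘ₗ
          (LinearMap.rTensor H eH) := by
      rw [rTensor, rTensor, ← TensorProduct.map_comp, LinearMap.id_comp]
    rw [e5, LinearMap.comp_apply, hHl h]
    simp [LinearMap.toSpanSingleton_apply]
  -- Q2 lemmas
  have hQ1 : ∀ x : M,
      sweedlerPair k dH dM (sweedlerPair k dH dM act psi) (sweedlerPair k dH dM act psi)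
        (oneH ⊗ₜ x)
      = TensorProduct.map ((TensorProduct.mk k M H).flip oneH)
          ((TensorProduct.mk k M H).flip oneH) (dM x) := by
    intro x
    have e1 : sweedlerPair k dH dM (sweedlerPair k dH dM act psi) (sweedlerPair k dH dM act psi)
        (oneH ⊗ₜ x)
        = TensorProduct.map (sweedlerPair k dH dM act psi) (sweedlerPair k dH dM act psi)
          ((TensorProduct.tensorTensorTensorComm k H H M M) ((oneH ⊗ₜ oneH) ⊗ₜ dM x)) := by
      simp only [sweedlerPair, LinearMap.comp_apply, TensorProduct.map_tmul, ho₁,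
        LinearEquiv.coe_coe]
    rw [e1, ttt_tmul_left, ← LinearMap.comp_apply, ← TensorProduct.map_comp,
      show sweedlerPair k dH dM act psi ∘ₗ TensorProduct.mk k H M oneH =
        (TensorProduct.mk k M H).flip oneH from LinearMap.ext fun y => by simpa using hP1 y]
  have hQ2 : ∀ h : H,
      sweedlerPair k dH dM (sweedlerPair k dH dM act psi) (sweedlerPair k dH dM act psi)
        (h ⊗ₜ e)
      = TensorProduct.map (TensorProduct.mk k M H e) (TensorProduct.mk k M H e) (dH h) := by
    intro h
    have e1 : sweedlerPair k dH dM (sweedlerPair k dH dM act psi) (sweedlerPair k dH dM act psi)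
        (h ⊗ₜ e)
        = TensorProduct.map (sweedlerPair k dH dM act psi) (sweedlerPair k dH dM act psi)
          ((TensorProduct.tensorTensorTensorComm k H H M M) (dH h ⊗ₜ (e ⊗ₜ e))) := by
      simp only [sweedlerPair, LinearMap.comp_apply, TensorProduct.map_tmul, he₁,
        LinearEquiv.coe_coe]
    rw [e1, ttt_tmul_right, ← LinearMap.comp_apply, ← TensorProduct.map_comp,
      show sweedlerPair k dH dM act psi ∘ₗ (TensorProduct.mk k H M).flip e =
        TensorProduct.mk k M H e from LinearMap.ext fun y => by simpa using hP2 y]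
  -- main formulas
  have hL : ∀ (x : M) (h : H),
      bdcpMulBialg k M H dM dH act psi mM th mH gam ((e ⊗ₜ oneH) ⊗ₜ (x ⊗ₜ h))
      = TensorProduct.map (auxA1 mM gam ∘ₗ auxJL e oneH) (auxB1 th mH ∘ₗ auxJL e oneH)
          ((TensorProduct.tensorTensorTensorComm k M M H H) (dM x ⊗ₜ dH h)) := by
    intro x h
    simp only [bdcpMulBialg, LinearMap.comp_apply, LinearMap.rTensor_tmul, he₁,
      TensorProduct.assoc_tmul, LinearMap.lTensor_tmul, LinearEquiv.coe_coe,
      TensorProduct.assoc_symm_tmul, TensorProduct.map_tmul]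
    rw [hQ1 x, ttt_nat_left, ttt_tmul_left, ← LinearMap.comp_apply (TensorProduct.map _ _),
      ← TensorProduct.map_comp, ← LinearMap.comp_apply (TensorProduct.map _ _),
      ← TensorProduct.map_comp]
    congr 2
  have hR : ∀ (x : M) (h : H),
      bdcpMulBialg k M H dM dH act psi mM th mH gam ((x ⊗ₜ h) ⊗ₜ (e ⊗ₜ oneH))
      = TensorProduct.map (auxA1 mM gam ∘ₗ auxJR e oneH) (auxB1 th mH ∘ₗ auxJR e oneH)
          ((TensorProduct.tensorTensorTensorComm k M M H H) (dM x ⊗ₜ dH h)) := by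
    intro x h
    simp only [bdcpMulBialg, LinearMap.comp_apply, LinearMap.rTensor_tmul, ho₁,
      TensorProduct.assoc_tmul, LinearMap.lTensor_tmul, LinearEquiv.coe_coe,
      TensorProduct.assoc_symm_tmul, TensorProduct.map_tmul]
    rw [hQ2 h, ttt_tmul_right, ← LinearMap.comp_apply (TensorProduct.map _ _),
      ← TensorProduct.map_comp, ttt_nat_right,
      ← LinearMap.comp_apply (TensorProduct.map _ _), ← TensorProduct.map_comp]
    congr 2
  -- evaluation of the components
  have uL_ap : ∀ (x : M) (h : H),
      (auxA1 mM gam ∘ₗ auxJL e oneH) (x ⊗ₜ h) = mM (e ⊗ₜ mM (x ⊗ₜ gam (oneH ⊗ₜ h))) :=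
    fun x h => auxA1_JL mM gam e oneH x h
  have vL_ap : ∀ (x : M) (h : H),
      (auxB1 th mH ∘ₗ auxJL e oneH) (x ⊗ₜ h) = mH (mH (th (e ⊗ₜ x) ⊗ₜ oneH) ⊗ₜ h) :=
    fun x h => auxB1_JL th mH e oneH x h
  have uR_ap : ∀ (x : M) (h : H),
      (auxA1 mM gam ∘ₗ auxJR e oneH) (x ⊗ₜ h) = mM (x ⊗ₜ mM (e ⊗ₜ gam (h ⊗ₜ oneH))) :=
    fun x h => auxA1_JR mM gam e oneH x h
  have vR_ap : ∀ (x : M) (h : H),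
      (auxB1 th mH ∘ₗ auxJR e oneH) (x ⊗ₜ h) = mH (mH (th (x ⊗ₜ e) ⊗ₜ h) ⊗ₜ oneH) :=
    fun x h => auxB1_JR th mH e oneH x h
  -- key lemma for the backward direction
  have keyfinal : ∀ (u : M ⊗[k] H →ₗ[k] M) (v : M ⊗[k] H →ₗ[k] H),
      (∀ (x : M) (h : H), u (x ⊗ₜ h) = eH h • x) →
      (∀ (x : M) (h : H), v (x ⊗ₜ h) = eM x • h) →
      ∀ (x : M) (h : H),
        TensorProduct.map u v
          ((TensorProduct.tensorTensorTensorComm k M M H H) (dM x ⊗ₜ dH h)) = x ⊗ₜ h := by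
    intro u v hu hv x h
    have e1 : TensorProduct.map u v ∘ₗ
          (TensorProduct.tensorTensorTensorComm k M M H H).toLinearMap =
        TensorProduct.map ((TensorProduct.rid k M).toLinearMap ∘ₗ LinearMap.lTensor M eM)
          ((TensorProduct.lid k H).toLinearMap ∘ₗ LinearMap.rTensor H eH) := by
      apply TensorProduct.ext_fourfold'
      intro x₁ x₂ h₁ h₂
      simp only [LinearMap.comp_apply, LinearEquiv.coe_coe, tensorTensorTensorComm_tmul,
        TensorProduct.map_tmul, hu, hv, LinearMap.lTensor_tmul, LinearMap.rTensor_tmul,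
        TensorProduct.rid_tmul, TensorProduct.lid_tmul]
      simp only [← smul_tmul', tmul_smul, smul_smul]
      rw [mul_comm]
    have e2 := congrFun (congrArg DFunLike.coe e1) (dM x ⊗ₜ dH h)
    simp only [LinearMap.comp_apply, LinearEquiv.coe_coe, TensorProduct.map_tmul] at e2
    rw [e2, hMr x, hHl h]
    simp
  constructor
  · rintro ⟨h1, h2⟩
    have hL' : ∀ (x : M) (h : H),
        TensorProduct.map (auxA1 mM gam ∘ₗ auxJL e oneH) (auxB1 th mH ∘ₗ auxJL e oneH)
          ((TensorProduct.tensorTensorTensorComm k M M H H) (dM x ⊗ₜ dH h)) = x ⊗ₜ h := by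
      intro x h; rw [← hL x h]; exact h1 _
    have hR' : ∀ (x : M) (h : H),
        TensorProduct.map (auxA1 mM gam ∘ₗ auxJR e oneH) (auxB1 th mH ∘ₗ auxJR e oneH)
          ((TensorProduct.tensorTensorTensorComm k M M H H) (dM x ⊗ₜ dH h)) = x ⊗ₜ h := by
      intro x h; rw [← hR x h]; exact h2 _
    -- counit values
    have eM_uL : ∀ (x : M) (h : H),
        eM ((auxA1 mM gam ∘ₗ auxJL e oneH) (x ⊗ₜ h)) = eM x * eH h := by
      intro x h; rw [uL_ap]; simp [hmM₂, hgam₂, he₂, ho₂]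
    have eH_vL : ∀ (x : M) (h : H),
        eH ((auxB1 th mH ∘ₗ auxJL e oneH) (x ⊗ₜ h)) = eM x * eH h := by
      intro x h; rw [vL_ap]; simp [hmH₂, hth₂, he₂, ho₂]
    have eM_uR : ∀ (x : M) (h : H),
        eM ((auxA1 mM gam ∘ₗ auxJR e oneH) (x ⊗ₜ h)) = eM x * eH h := by
      intro x h; rw [uR_ap]; simp [hmM₂, hgam₂, he₂, ho₂, mul_comm]
    have eH_vR : ∀ (x : M) (h : H),
        eH ((auxB1 th mH ∘ₗ auxJR e oneH) (x ⊗ₜ h)) = eM x * eH h := by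
      intro x h; rw [vR_ap]; simp [hmH₂, hth₂, he₂, ho₂, mul_comm]
    -- specialization at x = e (left unit)
    have sL1 : ∀ hh : H,
        TensorProduct.map ((auxA1 mM gam ∘ₗ auxJL e oneH) ∘ₗ TensorProduct.mk k M H e)
          ((auxB1 th mH ∘ₗ auxJL e oneH) ∘ₗ TensorProduct.mk k M H e) (dH hh) = e ⊗ₜ hh := by
      intro hh
      have h0 := hL' e hh
      rw [he₁, ttt_tmul_left, ← LinearMap.comp_apply (TensorProduct.map _ _),
        ← TensorProduct.map_comp] at h0
      exact h0
    have condA : ∀ hh : H, mH (oneH ⊗ₜ hh) = hh := by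
      intro hh
      have cα : eM ∘ₗ ((auxA1 mM gam ∘ₗ auxJL e oneH) ∘ₗ TensorProduct.mk k M H e) = eH :=
        LinearMap.ext fun y => by
          simp only [LinearMap.comp_apply, TensorProduct.mk_apply]
          rw [← LinearMap.comp_apply (auxA1 mM gam), eM_uL e y, he₂, one_mul]
      have hx := extract_fst dH eH hH₂ ((auxA1 mM gam ∘ₗ auxJL e oneH) ∘ₗ TensorProduct.mk k M H e) ((auxB1 th mH ∘ₗ auxJL e oneH) ∘ₗ TensorProduct.mk k M H e) eM cα hh
      rw [sL1 hh] at hx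
      simp only [LinearMap.rTensor_tmul, TensorProduct.lid_tmul, he₂, one_smul,
        ] at hx
      rw [LinearMap.comp_apply, TensorProduct.mk_apply, vL_ap, hn₅, hn₆] at hx
      exact hx.symm
    have condB : ∀ hh : H, mM (e ⊗ₜ mM (e ⊗ₜ gam (oneH ⊗ₜ hh))) = eH hh • e := by
      intro hh
      have cβ : eH ∘ₗ ((auxB1 th mH ∘ₗ auxJL e oneH) ∘ₗ TensorProduct.mk k M H e) = eH :=
        LinearMap.ext fun y => by
          simp only [LinearMap.comp_apply, TensorProduct.mk_apply]
          rw [← LinearMap.comp_apply (auxB1 th mH), eH_vL e y, he₂, one_mul]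
      have hx := extract_snd dH eH hH₃ ((auxA1 mM gam ∘ₗ auxJL e oneH) ∘ₗ TensorProduct.mk k M H e) ((auxB1 th mH ∘ₗ auxJL e oneH) ∘ₗ TensorProduct.mk k M H e) eH cβ hh
      rw [sL1 hh] at hx
      simp only [LinearMap.lTensor_tmul, TensorProduct.rid_tmul,
        ] at hx
      rw [LinearMap.comp_apply, TensorProduct.mk_apply, uL_ap] at hx
      exact hx.symm
    -- specialization at h = oneH (left unit)
    have sL2 : ∀ x : M,
        TensorProduct.map ((auxA1 mM gam ∘ₗ auxJL e oneH) ∘ₗ (TensorProduct.mk k M H).flip oneH)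
          ((auxB1 th mH ∘ₗ auxJL e oneH) ∘ₗ (TensorProduct.mk k M H).flip oneH) (dM x)
          = x ⊗ₜ oneH := by
      intro x
      have h0 := hL' x oneH
      rw [ho₁, ttt_tmul_right, ← LinearMap.comp_apply (TensorProduct.map _ _),
        ← TensorProduct.map_comp] at h0
      exact h0
    have condC : ∀ x : M, mM (e ⊗ₜ mM (x ⊗ₜ e)) = x := by
      intro x
      have cβ : eH ∘ₗ ((auxB1 th mH ∘ₗ auxJL e oneH) ∘ₗ (TensorProduct.mk k M H).flip oneH)
          = eM :=
        LinearMap.ext fun y => by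
          simp only [LinearMap.comp_apply, LinearMap.flip_apply, TensorProduct.mk_apply]
          rw [← LinearMap.comp_apply (auxB1 th mH), eH_vL y oneH, ho₂, mul_one]
      have hx := extract_snd dM eM hM₃ ((auxA1 mM gam ∘ₗ auxJL e oneH) ∘ₗ (TensorProduct.mk k M H).flip oneH) ((auxB1 th mH ∘ₗ auxJL e oneH) ∘ₗ (TensorProduct.mk k M H).flip oneH) eH cβ x
      rw [sL2 x] at hx
      simp only [LinearMap.lTensor_tmul, TensorProduct.rid_tmul, ho₂, one_smul,
        ] at hx
      rw [LinearMap.comp_apply, LinearMap.flip_apply, TensorProduct.mk_apply, uL_ap, hn₈] at hx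
      exact hx.symm
    have condD : ∀ x : M, mH (mH (th (e ⊗ₜ x) ⊗ₜ oneH) ⊗ₜ oneH) = eM x • oneH := by
      intro x
      have cα : eM ∘ₗ ((auxA1 mM gam ∘ₗ auxJL e oneH) ∘ₗ (TensorProduct.mk k M H).flip oneH)
          = eM :=
        LinearMap.ext fun y => by
          simp only [LinearMap.comp_apply, LinearMap.flip_apply, TensorProduct.mk_apply]
          rw [← LinearMap.comp_apply (auxA1 mM gam), eM_uL y oneH, ho₂, mul_one]
      have hx := extract_fst dM eM hM₂ ((auxA1 mM gam ∘ₗ auxJL e oneH) ∘ₗ (TensorProduct.mk k M H).flip oneH) ((auxB1 th mH ∘ₗ auxJL e oneH) ∘ₗ (TensorProduct.mk k M H).flip oneH) eM cα x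
      rw [sL2 x] at hx
      simp only [LinearMap.rTensor_tmul, TensorProduct.lid_tmul,
        ] at hx
      rw [LinearMap.comp_apply, LinearMap.flip_apply, TensorProduct.mk_apply, vL_ap] at hx
      exact hx.symm
    -- specialization at x = e (right unit)
    have sR1 : ∀ hh : H,
        TensorProduct.map ((auxA1 mM gam ∘ₗ auxJR e oneH) ∘ₗ TensorProduct.mk k M H e)
          ((auxB1 th mH ∘ₗ auxJR e oneH) ∘ₗ TensorProduct.mk k M H e) (dH hh) = e ⊗ₜ hh := by
      intro hh
      have h0 := hR' e hh
      rw [he₁, ttt_tmul_left, ← LinearMap.comp_apply (TensorProduct.map _ _),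
        ← TensorProduct.map_comp] at h0
      exact h0
    have condE : ∀ hh : H, mH (hh ⊗ₜ oneH) = hh := by
      intro hh
      have cα : eM ∘ₗ ((auxA1 mM gam ∘ₗ auxJR e oneH) ∘ₗ TensorProduct.mk k M H e) = eH :=
        LinearMap.ext fun y => by
          simp only [LinearMap.comp_apply, TensorProduct.mk_apply]
          rw [← LinearMap.comp_apply (auxA1 mM gam), eM_uR e y, he₂, one_mul]
      have hx := extract_fst dH eH hH₂ ((auxA1 mM gam ∘ₗ auxJR e oneH) ∘ₗ TensorProduct.mk k M H e) ((auxB1 th mH ∘ₗ auxJR e oneH) ∘ₗ TensorProduct.mk k M H e) eM cα hh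
      rw [sR1 hh] at hx
      simp only [LinearMap.rTensor_tmul, TensorProduct.lid_tmul, he₂, one_smul,
        ] at hx
      rw [LinearMap.comp_apply, TensorProduct.mk_apply, vR_ap, hn₅, condA hh] at hx
      exact hx.symm
    have condF : ∀ hh : H, mM (e ⊗ₜ mM (e ⊗ₜ gam (hh ⊗ₜ oneH))) = eH hh • e := by
      intro hh
      have cβ : eH ∘ₗ ((auxB1 th mH ∘ₗ auxJR e oneH) ∘ₗ TensorProduct.mk k M H e) = eH :=
        LinearMap.ext fun y => by
          simp only [LinearMap.comp_apply, TensorProduct.mk_apply]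
          rw [← LinearMap.comp_apply (auxB1 th mH), eH_vR e y, he₂, one_mul]
      have hx := extract_snd dH eH hH₃ ((auxA1 mM gam ∘ₗ auxJR e oneH) ∘ₗ TensorProduct.mk k M H e) ((auxB1 th mH ∘ₗ auxJR e oneH) ∘ₗ TensorProduct.mk k M H e) eH cβ hh
      rw [sR1 hh] at hx
      simp only [LinearMap.lTensor_tmul, TensorProduct.rid_tmul,
        ] at hx
      rw [LinearMap.comp_apply, TensorProduct.mk_apply, uR_ap] at hx
      exact hx.symm
    -- specialization at h = oneH (right unit)
    have sR2 : ∀ x : M,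
        TensorProduct.map ((auxA1 mM gam ∘ₗ auxJR e oneH) ∘ₗ (TensorProduct.mk k M H).flip oneH)
          ((auxB1 th mH ∘ₗ auxJR e oneH) ∘ₗ (TensorProduct.mk k M H).flip oneH) (dM x)
          = x ⊗ₜ oneH := by
      intro x
      have h0 := hR' x oneH
      rw [ho₁, ttt_tmul_right, ← LinearMap.comp_apply (TensorProduct.map _ _),
        ← TensorProduct.map_comp] at h0
      exact h0
    have condG : ∀ x : M, mM (x ⊗ₜ e) = x := by
      intro x
      have cβ : eH ∘ₗ ((auxB1 th mH ∘ₗ auxJR e oneH) ∘ₗ (TensorProduct.mk k M H).flip oneH)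
          = eM :=
        LinearMap.ext fun y => by
          simp only [LinearMap.comp_apply, LinearMap.flip_apply, TensorProduct.mk_apply]
          rw [← LinearMap.comp_apply (auxB1 th mH), eH_vR y oneH, ho₂, mul_one]
      have hx := extract_snd dM eM hM₃ ((auxA1 mM gam ∘ₗ auxJR e oneH) ∘ₗ (TensorProduct.mk k M H).flip oneH) ((auxB1 th mH ∘ₗ auxJR e oneH) ∘ₗ (TensorProduct.mk k M H).flip oneH) eH cβ x
      rw [sR2 x] at hx
      simp only [LinearMap.lTensor_tmul, TensorProduct.rid_tmul, ho₂, one_smul,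
        ] at hx
      rw [LinearMap.comp_apply, LinearMap.flip_apply, TensorProduct.mk_apply, uR_ap, hn₈, hn₇] at hx
      exact hx.symm
    have condH : ∀ x : M, th (x ⊗ₜ e) = eM x • oneH := by
      intro x
      have cα : eM ∘ₗ ((auxA1 mM gam ∘ₗ auxJR e oneH) ∘ₗ (TensorProduct.mk k M H).flip oneH)
          = eM :=
        LinearMap.ext fun y => by
          simp only [LinearMap.comp_apply, LinearMap.flip_apply, TensorProduct.mk_apply]
          rw [← LinearMap.comp_apply (auxA1 mM gam), eM_uR y oneH, ho₂, mul_one]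
      have hx := extract_fst dM eM hM₂ ((auxA1 mM gam ∘ₗ auxJR e oneH) ∘ₗ (TensorProduct.mk k M H).flip oneH) ((auxB1 th mH ∘ₗ auxJR e oneH) ∘ₗ (TensorProduct.mk k M H).flip oneH) eM cα x
      rw [sR2 x] at hx
      simp only [LinearMap.rTensor_tmul, TensorProduct.lid_tmul,
        ] at hx
      rw [LinearMap.comp_apply, LinearMap.flip_apply, TensorProduct.mk_apply, vR_ap, condE, condE] at hx
      exact hx.symm
    -- assemble the eight conditions
    have c2 : ∀ x : M, mM (x ⊗ₜ e) = x := condG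
    have c1 : ∀ x : M, mM (e ⊗ₜ x) = x := by
      intro x
      have := condC x
      rwa [c2 x] at this
    have c3 : ∀ h : H, mH (oneH ⊗ₜ h) = h := condA
    have c4 : ∀ h : H, mH (h ⊗ₜ oneH) = h := condE
    have c5 : ∀ x : M, th (x ⊗ₜ e) = eM x • oneH := condH
    have c6 : ∀ x : M, th (e ⊗ₜ x) = eM x • oneH := by
      intro x
      have := condD x
      rwa [c4, c4] at this
    have c7 : ∀ h : H, gam (h ⊗ₜ oneH) = eH h • e := by
      intro h
      have := condF h
      rwa [c1, c1] at this
    have c8 : ∀ h : H, gam (oneH ⊗ₜ h) = eH h • e := by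
      intro h
      have := condB h
      rwa [c1, c1] at this
    exact ⟨c1, c2, c3, c4, c5, c6, c7, c8⟩
  · rintro ⟨c1, c2, c3, c4, c5, c6, c7, c8⟩
    have hu_L : ∀ (x : M) (h : H), (auxA1 mM gam ∘ₗ auxJL e oneH) (x ⊗ₜ h) = eH h • x := by
      intro x h
      rw [uL_ap, c8, tmul_smul, map_smul, c2, tmul_smul, map_smul, c1]
    have hv_L : ∀ (x : M) (h : H), (auxB1 th mH ∘ₗ auxJL e oneH) (x ⊗ₜ h) = eM x • h := by
      intro x h
      rw [vL_ap, c6, ← smul_tmul', map_smul, hn₆, ← smul_tmul', map_smul, c3]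
    have hu_R : ∀ (x : M) (h : H), (auxA1 mM gam ∘ₗ auxJR e oneH) (x ⊗ₜ h) = eH h • x := by
      intro x h
      rw [uR_ap, c7, tmul_smul, map_smul, hn₇, tmul_smul, map_smul, c2]
    have hv_R : ∀ (x : M) (h : H), (auxB1 th mH ∘ₗ auxJR e oneH) (x ⊗ₜ h) = eM x • h := by
      intro x h
      rw [vR_ap, c5, ← smul_tmul', map_smul, c3, ← smul_tmul', map_smul, c4]
    constructor
    · intro a
      induction a using TensorProduct.induction_on with
      | zero => rw [tmul_zero, map_zero]
      | tmul x h => rw [hL x h]; exact keyfinal _ _ hu_L hv_L x h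
      | add s t hs ht => rw [tmul_add, map_add, hs, ht]
    · intro a
      induction a using TensorProduct.induction_on with
      | zero => rw [zero_tmul, map_zero]
      | tmul x h => rw [hR x h]; exact keyfinal _ _ hu_R hv_R x h
      | add s t hs ht => rw [add_tmul, map_add, hs, ht]


end
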